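/- arXiv:2105.14605 — 5 statements merged into one kernel-verified Lean document; each statement's English description precedes it below -/
import Mathlib

section
/- Let D be a weighted oriented graph such that w(v) > 1 for every vertex v of D. If the whole vertex set V(D) is a strong vertex cover of D, then I(D)^(s) = I(D)^s for all s ≥ 1, where I(D)^(s) denotes the s-th symbolic power of the edge ideal I(D). -/
open MvPolynomial

/-- A weighted oriented graph on the (finite) vertex type `V`: a set of directed
edges whose underlying edge set is a finite simple graph, together with a weight
function `w : V → ℕ` with `w v ≥ 1` for every vertex. -/
structure WOGraph (V : Type*) where
  E : Set (V × V)
  w : V → ℕ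
  loopless : ∀ v : V, (v, v) ∉ E
  one_dir : ∀ u v : V, (u, v) ∈ E → (v, u) ∉ E
  w_pos : ∀ v : V, 1 ≤ w v

namespace WOGraph

variable {V : Type*}

/-- The out-neighbourhood `N⁺(x)`. -/
def outN (D : WOGraph V) (x : V) : Set V := {y | (x, y) ∈ D.E}

/-- The in-neighbourhood `N⁻(x)`. -/
def inN (D : WOGraph V) (x : V) : Set V := {y | (y, x) ∈ D.E}

/-- An isolated vertex: no neighbours at all. -/
def IsIsolated (D : WOGraph V) (x : V) : Prop := D.outN x = ∅ ∧ D.inN x = ∅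

/-- A source: a non-isolated vertex with empty in-neighbourhood. -/
def IsSource (D : WOGraph V) (x : V) : Prop := ¬ D.IsIsolated x ∧ D.inN x = ∅

/-- A sink: a non-isolated vertex with empty out-neighbourhood. -/
def IsSink (D : WOGraph V) (x : V) : Prop := ¬ D.IsIsolated x ∧ D.outN x = ∅

/-- A vertex cover: a set of vertices meeting every edge. -/
def IsVertexCover (D : WOGraph V) (C : Set V) : Prop := ∀ e ∈ D.E, e.1 ∈ C ∨ e.2 ∈ C

/-- `L₁(C) = {x ∈ C : N⁺(x) ∩ Cᶜ ≠ ∅}`. -/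
def L1 (D : WOGraph V) (C : Set V) : Set V := {x ∈ C | (D.outN x ∩ Cᶜ).Nonempty}

/-- `L₂(C) = {x ∈ C \ L₁(C) : N⁻(x) ∩ Cᶜ ≠ ∅}`. -/
def L2 (D : WOGraph V) (C : Set V) : Set V :=
  {x ∈ C | x ∉ D.L1 C ∧ (D.inN x ∩ Cᶜ).Nonempty}

/-- `L₃(C) = C \ (L₁(C) ∪ L₂(C))`. -/
def L3 (D : WOGraph V) (C : Set V) : Set V := C \ (D.L1 C ∪ D.L2 C)

/-- A strong vertex cover: a vertex cover `C` such that for each `x ∈ L₃(C)` there is an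
edge `(y, x)` with `y ∈ L₂(C) ∪ L₃(C)` and `w(y) ≥ 2`. -/
def IsStrongVertexCover (D : WOGraph V) (C : Set V) : Prop :=
  D.IsVertexCover C ∧
    ∀ x ∈ D.L3 C, ∃ y : V, (y, x) ∈ D.E ∧ y ∈ D.L2 C ∪ D.L3 C ∧ 2 ≤ D.w y

/-- The edge ideal `I(D) = (x·y^{w(y)} : (x,y) ∈ E(D))` in `k[xᵥ : v ∈ V]`. -/
noncomputable def edgeIdeal (k : Type*) [Field k] (D : WOGraph V) : Ideal (MvPolynomial V k) :=
  Ideal.span {f | ∃ e ∈ D.E, f = X e.1 * X e.2 ^ D.w e.2}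

/-- The irreducible ideal `I_C = ({x : x ∈ L₁(C)} ∪ {x^{w(x)} : x ∈ L₂(C) ∪ L₃(C)})`
associated to a (strong) vertex cover `C`. -/
noncomputable def irredIdeal (k : Type*) [Field k] (D : WOGraph V) (C : Set V) : Ideal (MvPolynomial V k) :=
  Ideal.span ((fun v => (X v : MvPolynomial V k)) '' D.L1 C ∪
    (fun v => (X v : MvPolynomial V k) ^ D.w v) '' (D.L2 C ∪ D.L3 C))

/-- `D` is an oriented rooted tree with root `z`: `z` has no in-edges, and every
non-isolated vertex `v ≠ z` is reachable from `z` by a directed path and has a unique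
in-neighbour.  Equivalently, the underlying graph is a tree (on the support together
with the root) and every edge is directed away from the root `z` along the unique
path from `z`. -/
def IsOrientedRootedTree (D : WOGraph V) (z : V) : Prop :=
  (∀ u : V, (u, z) ∉ D.E) ∧
    ∀ v : V, ¬ D.IsIsolated v → v ≠ z →
      Relation.ReflTransGen (fun a b : V => (a, b) ∈ D.E) z v ∧ (∃! u : V, (u, v) ∈ D.E)

end WOGraph

/-- The `s`-th symbolic power `I^{(s)} = ⋂_{p ∈ Ass(R/I)} (I^s R_p ∩ R)` of an ideal `I`,
where the contraction `I^s R_p ∩ R` is the preimage of `I^s R_p` under `R → R_p`. -/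
noncomputable def symbolicPower {R : Type*} [CommRing R] (I : Ideal R) (s : ℕ) : Ideal R :=
  ⨅ p : associatedPrimes R (R ⧸ I),
    haveI : p.1.IsPrime := p.2.1
    (Ideal.map (algebraMap R (Localization p.1.primeCompl)) (I ^ s)).comap
      (algebraMap R (Localization p.1.primeCompl))

/-!
Every vertex `v` of `D` has an in-neighbour `y` with `w(y) ≥ 2`, since `L₃(V) = V` for the
cover `C = V`. Hence the monomial `f = ∏ᵥ v^{w(v) - 1}` lies outside `I(D)` while `v·f ∈ I(D)`
for every `v`: the edge `(y, v)` gives `y·v^{w(v)} ∣ v·f`. So `I(D) : f = 𝔪 = (xᵥ : v ∈ V)`, and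
the maximal ideal `𝔪` is an associated prime of `R/I(D)`. The symbolic power is therefore
contained in the contraction of `I(D)^s R_𝔪`, which is `I(D)^s` itself because a monomial ideal
`J` satisfies `u·a ∈ J → a ∈ J` whenever `u` has a nonzero constant term.
-/

section SymbolicPower

variable {R : Type*} [CommRing R] {I p : Ideal R}

theorem mem_associatedPrimes_quotient_of_forall_mem_iff_mul_mem [p.IsPrime] (f : R)
    (h : ∀ g, g ∈ p ↔ g * f ∈ I) : p ∈ associatedPrimes R (R ⧸ I) := by
  refine ⟨‹p.IsPrime›, Ideal.Quotient.mk I f, ?_⟩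
  suffices hp : p = (⊥ : Submodule R (R ⧸ I)).colon {Ideal.Quotient.mk I f} by
    rw [← hp, Ideal.IsPrime.radical ‹_›]
  ext g
  rw [h, Submodule.mem_colon_singleton, Submodule.mem_bot, Algebra.smul_def,
    Ideal.Quotient.algebraMap_eq, ← map_mul, Ideal.Quotient.eq_zero_iff_mem]

theorem pow_le_symbolicPower (s : ℕ) : I ^ s ≤ symbolicPower I s :=
  le_iInf fun _ => Ideal.le_comap_map

theorem symbolicPower_le_pow_of_mem_associatedPrimes (hp : p ∈ associatedPrimes R (R ⧸ I))
    {s : ℕ} (hsat : ∀ u a, u ∉ p → u * a ∈ I ^ s → a ∈ I ^ s) :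
    symbolicPower I s ≤ I ^ s := by
  have := hp.1
  intro a ha
  have hloc := (iInf_le _ ⟨p, hp⟩ : symbolicPower I s ≤ _) ha
  rw [Ideal.mem_comap, IsLocalization.algebraMap_mem_map_algebraMap_iff p.primeCompl] at hloc
  obtain ⟨u, hu, hua⟩ := hloc
  exact hsat u a hu hua

end SymbolicPower

namespace MvPolynomial

variable {σ R : Type*} [CommRing R]

def IsMonomialIdeal (I : Ideal (MvPolynomial σ R)) : Prop :=
  ∃ S : Set (σ →₀ ℕ), I = Ideal.span ((fun m => monomial m (1 : R)) '' S)

theorem idealOfVars_eq_ker_constantCoeff :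
    idealOfVars σ R = RingHom.ker (constantCoeff : MvPolynomial σ R →+* R) := by
  ext g
  rw [idealOfVars, ← Set.image_univ, mem_ideal_span_X_image, RingHom.mem_ker, constantCoeff_eq]
  refine ⟨fun h => ?_, fun h m hm => ?_⟩
  · by_contra h0
    obtain ⟨i, -, hi⟩ := h 0 (mem_support_iff.mpr h0)
    exact hi rfl
  · obtain ⟨i, hi⟩ := Finsupp.ne_iff.mp (ne_of_mem_of_not_mem hm (notMem_support_iff.mpr h))
    exact ⟨i, Set.mem_univ i, hi⟩

theorem coeff_mul_eq_constantCoeff_mul_coeff {u a : MvPolynomial σ R} {m : σ →₀ ℕ}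
    (hm : ∀ q ∈ a.support, q ≤ m → q = m) : (u * a).coeff m = constantCoeff u * a.coeff m := by
  classical
  rw [coeff_mul, Finset.sum_eq_single ((0 : σ →₀ ℕ), m), constantCoeff_eq]
  · rintro ⟨p, q⟩ hpq hne
    have hpq : p + q = m := Finset.HasAntidiagonal.mem_antidiagonal.mp hpq
    by_cases hq : q ∈ a.support
    · obtain rfl := hm q hq (hpq ▸ le_add_self)
      exact absurd (by rw [add_eq_right.mp hpq]) hne
    · rw [notMem_support_iff.mp hq, mul_zero]
  · exact fun h => absurd (Finset.HasAntidiagonal.mem_antidiagonal.mpr (zero_add m)) h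

namespace IsMonomialIdeal

variable {I J : Ideal (MvPolynomial σ R)}

theorem mul (hI : IsMonomialIdeal I) (hJ : IsMonomialIdeal J) : IsMonomialIdeal (I * J) := by
  obtain ⟨S, rfl⟩ := hI
  obtain ⟨T, rfl⟩ := hJ
  refine ⟨Set.image2 (· + ·) S T, ?_⟩
  rw [Ideal.span_mul_span', ← Set.image2_mul, Set.image2_image_left, Set.image2_image_right,
    Set.image_image2]
  simp only [monomial_mul, mul_one]

theorem pow (hI : IsMonomialIdeal I) (n : ℕ) : IsMonomialIdeal (I ^ n) := by
  induction n with
  | zero => exact ⟨{0}, by simp [Ideal.one_eq_top]⟩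
  | succ n ih => exact pow_succ I n ▸ ih.mul hI

theorem mem_of_mul_mem [NoZeroDivisors R] (hI : IsMonomialIdeal I) {u a : MvPolynomial σ R}
    (hu : constantCoeff u ≠ 0) (h : u * a ∈ I) : a ∈ I := by
  obtain ⟨S, rfl⟩ := hI
  rw [mem_ideal_span_monomial_image] at h ⊢
  -- a minimal exponent of `a` outside the ideal appears in `u * a` with coefficient
  -- `constantCoeff u * a.coeff m ≠ 0`
  by_contra! hbad
  obtain ⟨m, ⟨hma, hmS⟩, hmin⟩ := exists_minimal_of_wellFoundedLT _ hbad
  have hcoeff : (u * a).coeff m ≠ 0 := by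
    rw [coeff_mul_eq_constantCoeff_mul_coeff fun q hq hqm =>
      le_antisymm hqm (hmin ⟨hq, fun s hs hsq => hmS s hs (hsq.trans hqm)⟩ hqm)]
    exact mul_ne_zero hu (mem_support_iff.mp hma)
  obtain ⟨s, hs, hsm⟩ := h m (mem_support_iff.mpr hcoeff)
  exact hmS s hs hsm

theorem idealOfVars_mem_associatedPrimes [IsDomain R] (hI : IsMonomialIdeal I)
    {f : MvPolynomial σ R} (hf : f ∉ I) (hXf : ∀ i, X i * f ∈ I) :
    idealOfVars σ R ∈ associatedPrimes (MvPolynomial σ R) (MvPolynomial σ R ⧸ I) := by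
  have : (idealOfVars σ R).IsPrime := by
    rw [idealOfVars_eq_ker_constantCoeff]
    exact RingHom.ker_isPrime _
  refine mem_associatedPrimes_quotient_of_forall_mem_iff_mul_mem f fun g => ⟨fun hg => ?_, ?_⟩
  · have hle : idealOfVars σ R ≤ I.colon (Ideal.span {f}) := Ideal.span_le.mpr <| by
      rintro _ ⟨i, rfl⟩
      exact Ideal.mem_colon_span_singleton.mpr (hXf i)
    exact Ideal.mem_colon_span_singleton.mp (hle hg)
  · contrapose!
    intro hg hgf
    rw [idealOfVars_eq_ker_constantCoeff, RingHom.mem_ker] at hg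
    exact hf (hI.mem_of_mul_mem hg hgf)

theorem symbolicPower_eq_pow [IsDomain R] (hI : IsMonomialIdeal I) {f : MvPolynomial σ R}
    (hf : f ∉ I) (hXf : ∀ i, X i * f ∈ I) (s : ℕ) : symbolicPower I s = I ^ s := by
  refine le_antisymm ?_ (pow_le_symbolicPower s)
  refine symbolicPower_le_pow_of_mem_associatedPrimes
    (hI.idealOfVars_mem_associatedPrimes hf hXf) fun u a hu hua => ?_
  rw [idealOfVars_eq_ker_constantCoeff, RingHom.mem_ker] at hu
  exact (hI.pow s).mem_of_mul_mem hu hua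

end IsMonomialIdeal

end MvPolynomial

namespace WOGraph

variable {V : Type*} (k : Type*) [Field k] (D : WOGraph V)

theorem edgeIdeal_eq_span_monomial : D.edgeIdeal k = Ideal.span ((fun m => monomial m (1 : k)) ''
    ((fun e : V × V => Finsupp.single e.1 1 + Finsupp.single e.2 (D.w e.2)) '' D.E)) := by
  simp_rw [edgeIdeal, Set.image_image, X_pow_eq_monomial, X, monomial_mul, mul_one]
  congr 1
  ext f
  simp [eq_comm]

theorem isMonomialIdeal_edgeIdeal : IsMonomialIdeal (D.edgeIdeal k) :=
  ⟨_, D.edgeIdeal_eq_span_monomial k⟩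

theorem L3_univ : D.L3 Set.univ = Set.univ := by
  simp [L3, L1, L2]

variable {D} {F : V →₀ ℕ}

theorem monomial_notMem_edgeIdeal (hF : ∀ v, F v + 1 = D.w v) :
    monomial F (1 : k) ∉ D.edgeIdeal k := by
  rw [edgeIdeal_eq_span_monomial, mem_ideal_span_monomial_image]
  intro h
  obtain ⟨_, ⟨e, -, rfl⟩, hle⟩ := h F (by classical simp [support_monomial])
  have hle := hle e.2
  simp only [Finsupp.add_apply, Finsupp.single_eq_same] at hle
  have := hF e.2
  omega

theorem X_mul_monomial_mem_edgeIdeal (hF : ∀ v, F v + 1 = D.w v) {y v : V} (hyv : (y, v) ∈ D.E)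
    (hy : 2 ≤ D.w y) : X v * monomial F (1 : k) ∈ D.edgeIdeal k := by
  classical
  have hne : y ≠ v := fun h => D.loopless v (h ▸ hyv)
  rw [edgeIdeal_eq_span_monomial, X, monomial_mul, one_mul, mem_ideal_span_monomial_image]
  intro m hm
  rw [support_monomial, if_neg one_ne_zero, Finset.mem_singleton] at hm
  refine ⟨_, ⟨(y, v), hyv, rfl⟩, fun i => ?_⟩
  have := hF i
  simp only [hm, Finsupp.add_apply, Finsupp.single_apply]
  split_ifs <;> subst_vars <;> first | omega | exact absurd rfl hne

end WOGraph

theorem statement_1_general {V : Type*} [Fintype V] (k : Type*) [Field k] (D : WOGraph V)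
    (hC : D.IsStrongVertexCover (Set.univ : Set V)) :
    ∀ s : ℕ, 1 ≤ s → symbolicPower (D.edgeIdeal k) s = D.edgeIdeal k ^ s := by
  intro s _
  let F : V →₀ ℕ := Finsupp.equivFunOnFinite.symm fun v => D.w v - 1
  have hF : ∀ v, F v + 1 = D.w v := fun v => by
    simpa [F] using Nat.sub_add_cancel (D.w_pos v)
  refine (D.isMonomialIdeal_edgeIdeal k).symbolicPower_eq_pow
    (WOGraph.monomial_notMem_edgeIdeal k hF) (fun v => ?_) s
  obtain ⟨y, hyv, -, hy⟩ := hC.2 v (by rw [WOGraph.L3_univ]; trivial)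
  exact WOGraph.X_mul_monomial_mem_edgeIdeal k hF hyv hy

/-- Let `D` be a weighted oriented graph with `w(v) > 1` for every vertex.
If the whole vertex set `V(D)` is a strong vertex cover of `D`, then `I(D)^{(s)} = I(D)^s`
for all `s ≥ 1`. -/
theorem statement_1 {V : Type*} [Fintype V] (k : Type*) [Field k] (D : WOGraph V)
    (hw : ∀ v : V, 1 < D.w v)
    (hC : D.IsStrongVertexCover (Set.univ : Set V)) :
    ∀ s : ℕ, 1 ≤ s → symbolicPower (D.edgeIdeal k) s = D.edgeIdeal k ^ s :=
  statement_1_general k D hC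
end

section
/- Let D be a weighted oriented cycle with vertices x₁, ..., xₙ and directed edges (x₁,x₂), (x₂,x₃), ..., (x_{n-1},xₙ), (xₙ,x₁) (a naturally oriented cycle), such that w(v) > 1 for every vertex v. Then I(D)^(s) = I(D)^s for all s ≥ 1, i.e., the s-th symbolic power of the edge ideal I(D) = (x₁x₂^{w₂}, x₂x₃^{w₃}, ..., x_{n-1}xₙ^{wₙ}, xₙx₁^{w₁}) equals its s-th ordinary power. -/
open MvPolynomial

/-!
The maximal ideal `m = (x₁, …, xₙ)` is an associated prime of `R ⧸ I(D)`: the monomial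
`f = ∏ᵥ xᵥ^{w(v) - 1}` is not in `I(D)`, while every vertex `v` has an in-neighbour `u` with
`w(u) ≥ 2`, so that `x_u xᵥ^{w(v)} ∣ xᵥ f` and hence `m f ⊆ I(D)`.
Therefore `I(D)^(s) ⊆ I(D)^s R_m ∩ R`.
An element `u ∉ m` has nonzero constant term, so it is a nonzerodivisor modulo any monomial
ideal `J`: if `r ∉ J`, a minimal exponent of `r` dominating no generator of `J` keeps a nonzero
coefficient in `u r`. Applied to `J = I(D)^s` this gives `I(D)^s R_m ∩ R = I(D)^s`.
-/

namespace MvPolynomial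

variable {σ R : Type*} [CommSemiring R]

theorem coeff_mul_of_coeff_eq_zero_of_lt [NoZeroDivisors R] {u r : MvPolynomial σ R}
    {μ : σ →₀ ℕ} (hr : ∀ ν < μ, coeff ν r = 0) :
    coeff μ (u * r) = constantCoeff u * coeff μ r := by
  classical
  rw [coeff_mul, Finset.sum_eq_single ((0 : σ →₀ ℕ), μ)]
  · simp [constantCoeff_eq]
  · rintro ⟨a, b⟩ hab hne
    have hsum : a + b = μ := Finset.HasAntidiagonal.mem_antidiagonal.mp hab
    have hb : b < μ := lt_of_le_of_ne (hsum ▸ le_add_self) fun hbμ => hne (by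
      subst hbμ; simpa using hsum)
    simp [hr b hb]
  · simp

theorem mem_span_monomial_of_mul_mem [NoZeroDivisors R] (S : Set (σ →₀ ℕ))
    {u r : MvPolynomial σ R} (hu : constantCoeff u ≠ 0)
    (h : u * r ∈ Ideal.span ((monomial · (1 : R)) '' S)) :
    r ∈ Ideal.span ((monomial · (1 : R)) '' S) := by
  classical
  rw [mem_ideal_span_monomial_image] at h ⊢
  by_contra! hbad
  obtain ⟨μ, hμmin⟩ := (r.support.filter fun ν => ∀ s ∈ S, ¬s ≤ ν).exists_minimal
    (by simpa [Finset.Nonempty] using hbad)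
  have hμ := Finset.mem_filter.mp hμmin.prop
  have hlower : ∀ ν < μ, coeff ν r = 0 := by
    intro ν hν
    by_contra hν0
    exact hμmin.not_lt (Finset.mem_filter.mpr
      ⟨mem_support_iff.mpr hν0, fun s hs hsν => hμ.2 s hs (hsν.trans hν.le)⟩) hν
  obtain ⟨s, hs, hsμ⟩ := h μ (by
    rw [mem_support_iff, coeff_mul_of_coeff_eq_zero_of_lt hlower]
    exact mul_ne_zero hu (mem_support_iff.mp hμ.1))
  exact hμ.2 s hs hsμ

theorem exists_span_monomial_eq_pow (S : Set (σ →₀ ℕ)) (m : ℕ) :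
    ∃ T : Set (σ →₀ ℕ), Ideal.span ((monomial · (1 : R)) '' S) ^ m
      = Ideal.span ((monomial · (1 : R)) '' T) := by
  induction m with
  | zero => exact ⟨{0}, by simp [Ideal.one_eq_top]⟩
  | succ m ih =>
    obtain ⟨T, hT⟩ := ih
    refine ⟨Set.image2 (· + ·) T S, ?_⟩
    rw [pow_succ, hT, Ideal.span_mul_span', ← Set.image2_mul, Set.image2_image_left,
      Set.image2_image_right, Set.image_image2]
    simp only [monomial_mul, one_mul]

theorem mem_idealOfVars_iff {p : MvPolynomial σ R} :
    p ∈ idealOfVars σ R ↔ constantCoeff p = 0 := by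
  rw [← pow_one (idealOfVars σ R), mem_pow_idealOfVars_iff, constantCoeff_eq,
    ← notMem_support_iff]
  refine ⟨fun h h0 => by simpa using h 0 h0, fun h μ hμ => ?_⟩
  rw [Nat.one_le_iff_ne_zero, Ne, Finsupp.degree_eq_zero_iff]
  rintro rfl
  exact h hμ

theorem idealOfVars_eq_ker : idealOfVars σ R = RingHom.ker (constantCoeff (σ := σ) (R := R)) :=
  Ideal.ext fun _ => mem_idealOfVars_iff.trans RingHom.mem_ker.symm

theorem idealOfVars_isMaximal (k : Type*) [Field k] : (idealOfVars σ k).IsMaximal := by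
  rw [idealOfVars_eq_ker]
  exact RingHom.ker_isMaximal_of_surjective _ fun a => ⟨C a, constantCoeff_C σ a⟩

end MvPolynomial

section AssociatedPrimes

variable {R : Type*} [CommRing R]

theorem mem_associatedPrimes_of_le_colon {M : Type*} [AddCommGroup M] [Module R M]
    [IsNoetherianRing R] {m : Ideal R} (hm : m.IsMaximal) {x : M} (hx : x ≠ 0)
    (hmx : m ≤ (⊥ : Submodule R M).colon {x}) : m ∈ associatedPrimes R M := by
  obtain ⟨P, hP, hxP⟩ := exists_le_isAssociatedPrime_of_isNoetherianRing R x hx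
  rwa [hm.eq_of_le hP.isPrime.ne_top (hmx.trans hxP)]

theorem symbolicPower_eq_pow_of_mem_associatedPrimes {I p : Ideal R} {s : ℕ}
    (hp : p ∈ associatedPrimes R (R ⧸ I))
    (hreg : ∀ u ∉ p, ∀ r, u * r ∈ I ^ s → r ∈ I ^ s) :
    symbolicPower I s = I ^ s := by
  refine le_antisymm (fun r hr => ?_) (le_iInf fun _ => Ideal.le_comap_map)
  have : p.IsPrime := hp.isPrime
  have hrp := Ideal.mem_iInf.mp hr ⟨p, hp⟩
  rw [Ideal.mem_comap, ← IsLocalization.mk'_one (M := p.primeCompl),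
    IsLocalization.mk'_mem_map_algebraMap_iff] at hrp
  obtain ⟨u, hu, hur⟩ := hrp
  exact hreg u hu r hur

end AssociatedPrimes

namespace WOGraph

variable {V : Type*} (k : Type*) [Field k] (D : WOGraph V)

/-- The exponent vector of the generator `x y^{w(y)}` of the edge `e = (x, y)`. -/
noncomputable def edgeExponent (e : V × V) : V →₀ ℕ :=
  Finsupp.single e.1 1 + Finsupp.single e.2 (D.w e.2)

/-- The exponent vector of `∏ᵥ xᵥ^{w(v) - 1}`. -/
noncomputable def weightDeficit [Finite V] : V →₀ ℕ :=
  Finsupp.equivFunOnFinite.symm fun v => D.w v - 1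

theorem weightDeficit_apply [Finite V] (v : V) : D.weightDeficit v = D.w v - 1 := rfl

theorem edgeIdeal_eq_span_monomial_s2 :
    D.edgeIdeal k = Ideal.span ((monomial · (1 : k)) '' (D.edgeExponent '' D.E)) := by
  rw [edgeIdeal, Set.image_image]
  congr 1
  ext f
  simp only [Set.mem_ofPred_eq, Set.mem_image, edgeExponent, monomial_single_add, X_pow_eq_monomial,
    pow_one, eq_comm]

theorem monomial_weightDeficit_notMem_edgeIdeal [Finite V] :
    monomial D.weightDeficit (1 : k) ∉ D.edgeIdeal k := by
  classical
  rw [edgeIdeal_eq_span_monomial_s2, mem_ideal_span_monomial_image]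
  simp only [support_monomial, one_ne_zero, if_false, Finset.mem_singleton, forall_eq]
  rintro ⟨_, ⟨e, -, rfl⟩, hle⟩
  have hle₂ := hle e.2
  simp only [edgeExponent, Finsupp.add_apply, Finsupp.single_eq_same, weightDeficit_apply] at hle₂
  have hw₂ := D.w_pos e.2
  omega

theorem X_mul_monomial_weightDeficit_mem_edgeIdeal [Finite V] {u v : V} (huv : (u, v) ∈ D.E)
    (hu : 2 ≤ D.w u) : X v * monomial D.weightDeficit (1 : k) ∈ D.edgeIdeal k := by
  classical
  rw [edgeIdeal_eq_span_monomial_s2, X, monomial_mul, one_mul, mem_ideal_span_monomial_image]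
  simp only [support_monomial, one_ne_zero, if_false, Finset.mem_singleton, forall_eq]
  refine ⟨_, ⟨_, huv, rfl⟩, fun a => ?_⟩
  have hne : u ≠ v := fun h => D.loopless u (h ▸ huv)
  simp only [edgeExponent, Finsupp.add_apply, Finsupp.single_apply, weightDeficit_apply]
  have hwv := D.w_pos v
  split_ifs <;> grind

theorem idealOfVars_mem_associatedPrimes [Finite V]
    (hin : ∀ v, ∃ u, (u, v) ∈ D.E ∧ 2 ≤ D.w u) :
    idealOfVars V k ∈ associatedPrimes _ (MvPolynomial V k ⧸ D.edgeIdeal k) := by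
  refine mem_associatedPrimes_of_le_colon (idealOfVars_isMaximal k)
    (x := Ideal.Quotient.mk _ (monomial D.weightDeficit 1)) ?_ ?_
  · rw [Ne, Ideal.Quotient.eq_zero_iff_mem]
    exact D.monomial_weightDeficit_notMem_edgeIdeal k
  · rw [idealOfVars, Ideal.span_le]
    rintro _ ⟨v, rfl⟩
    obtain ⟨u, huv, hu⟩ := hin v
    rw [SetLike.mem_coe, Submodule.mem_colon_singleton, Submodule.mem_bot,
      ← Ideal.Quotient.mk_eq_mk, ← Submodule.Quotient.mk_smul, Ideal.Quotient.mk_eq_mk,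
      smul_eq_mul, Ideal.Quotient.eq_zero_iff_mem]
    exact D.X_mul_monomial_weightDeficit_mem_edgeIdeal k huv hu

theorem symbolicPower_edgeIdeal_eq_pow [Finite V]
    (hin : ∀ v, ∃ u, (u, v) ∈ D.E ∧ 2 ≤ D.w u) (s : ℕ) :
    symbolicPower (D.edgeIdeal k) s = D.edgeIdeal k ^ s := by
  refine symbolicPower_eq_pow_of_mem_associatedPrimes
    (D.idealOfVars_mem_associatedPrimes k hin) fun u hu r hur => ?_
  obtain ⟨T, hT⟩ := exists_span_monomial_eq_pow (R := k) (D.edgeExponent '' D.E) s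
  rw [edgeIdeal_eq_span_monomial_s2, hT] at hur ⊢
  exact mem_span_monomial_of_mul_mem T (mt mem_idealOfVars_iff.mpr hu) hur

end WOGraph

theorem statement_2_general {n : ℕ} (k : Type*) [Field k] (D : WOGraph (Fin n))
    (hE : D.E = {e : Fin n × Fin n | (e.2 : ℕ) = ((e.1 : ℕ) + 1) % n})
    (hw : ∀ v : Fin n, 1 < D.w v) :
    ∀ s : ℕ, 1 ≤ s → symbolicPower (D.edgeIdeal k) s = D.edgeIdeal k ^ s := by
  refine fun s _ => D.symbolicPower_edgeIdeal_eq_pow k (fun v => ?_) s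
  obtain ⟨u, hu⟩ : ∃ u : Fin n, ((u : ℕ) + 1) % n = v := by
    rcases v with ⟨_ | m, hm⟩
    · exact ⟨⟨n - 1, by omega⟩, by simp [Nat.sub_add_cancel (by omega : 1 ≤ n)]⟩
    · exact ⟨⟨m, by omega⟩, Nat.mod_eq_of_lt hm⟩
  exact ⟨u, by simp [hE, hu], hw u⟩

/-- Let `D` be a weighted naturally oriented cycle on vertices
`x_0, …, x_{n-1}` (edges `(x_i, x_{i+1 mod n})`) with `w(v) > 1` for every vertex.
Then `I(D)^{(s)} = I(D)^s` for all `s ≥ 1`. -/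
theorem statement_2 {n : ℕ} (hn : 3 ≤ n) (k : Type*) [Field k] (D : WOGraph (Fin n))
    (hE : D.E = {e : Fin n × Fin n | (e.2 : ℕ) = ((e.1 : ℕ) + 1) % n})
    (hw : ∀ v : Fin n, 1 < D.w v) :
    ∀ s : ℕ, 1 ≤ s → symbolicPower (D.edgeIdeal k) s = D.edgeIdeal k ^ s :=
  statement_2_general k D hE hw
end

section
/- Let R = k[x, y, z] be a polynomial ring in three variables over a field k, and let a, b be integers with a ≥ 2 and b ≥ 2. Then for all s ≥ 1, (x, z^b)^s ∩ (y^a, y z^b)^s ⊆ (x y^a, y z^b)^s. -/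
/-!
All three ideals are generated by two monomials, so the `s`-th powers are monomial ideals
generated by the products `f ^ i * g ^ j` with `i + j = s`, and membership is decided monomial by
monomial. A monomial `x^α y^β z^γ` lying in both `(x, z^b)^s` and `(y^a, y z^b)^s` is divisible
by some `x^(s-j₁) z^(b j₁)` and by some `y^(a(s-j₂) + j₂) z^(b j₂)`. With `j = max j₁ j₂` it is
then divisible by `(x y^a)^(s-j) (y z^b)^j`: trading a factor `y^a` for `y z^b` never raises the
`y`-degree because `a ≥ 1`.
-/

open MvPolynomial Finsupp

namespace Ideal

variable {R : Type*} [CommSemiring R]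

theorem span_pair_pow (f g : R) (s : ℕ) :
    span {f, g} ^ s = span ((fun ij : ℕ × ℕ => f ^ ij.1 * g ^ ij.2) '' {ij | ij.1 + ij.2 = s}) := by
  induction s with
  | zero =>
    rw [pow_zero, one_eq_top, eq_comm, eq_top_iff_one]
    exact subset_span ⟨(0, 0), rfl, by simp⟩
  | succ n ih =>
    rw [pow_succ, ih, span_mul_span']
    congr 1
    ext p
    constructor
    · rintro ⟨_, ⟨⟨i, j⟩, hij : i + j = n, rfl⟩, h, hh, rfl⟩
      rcases hh with rfl | rfl
      · exact ⟨(i + 1, j), by simp only [Set.mem_ofPred_eq]; omega, by ring⟩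
      · exact ⟨(i, j + 1), by simp only [Set.mem_ofPred_eq]; omega, by ring⟩
    · rintro ⟨⟨i, j⟩, hij : i + j = n + 1, rfl⟩
      cases i with
      | zero => exact ⟨_, ⟨(0, n), by simp, rfl⟩, g, by simp, by simp_all [pow_succ]⟩
      | succ i =>
        exact ⟨_, ⟨(i, j), by simp only [Set.mem_ofPred_eq]; omega, rfl⟩, f, by simp, by ring⟩

end Ideal

namespace MvPolynomial

variable {σ R : Type*} [CommSemiring R]

theorem span_monomial_pair_pow (u v : σ →₀ ℕ) (s : ℕ) :
    Ideal.span {monomial u (1 : R), monomial v 1} ^ s =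
      Ideal.span ((fun d => monomial d (1 : R)) ''
        ((fun ij : ℕ × ℕ => ij.1 • u + ij.2 • v) '' {ij | ij.1 + ij.2 = s})) := by
  rw [Ideal.span_pair_pow, Set.image_image]
  simp only [monomial_pow, monomial_mul, one_pow, one_mul]

theorem mem_span_monomial_pair_pow_iff {u v : σ →₀ ℕ} {s : ℕ} {p : MvPolynomial σ R} :
    p ∈ Ideal.span {monomial u 1, monomial v 1} ^ s ↔
      ∀ m ∈ p.support, ∃ i j, i + j = s ∧ i • u + j • v ≤ m := by
  rw [span_monomial_pair_pow, mem_ideal_span_monomial_image]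
  simp

end MvPolynomial

theorem exists_exponent_le_of_le_of_le {a b s : ℕ} (ha : 1 ≤ a) {m : Fin 3 →₀ ℕ} {i₁ j₁ i₂ j₂ : ℕ}
    (h₁ : i₁ + j₁ = s) (h₂ : i₂ + j₂ = s)
    (hm₁ : i₁ • single 0 1 + j₁ • single 2 b ≤ m)
    (hm₂ : i₂ • single 1 a + j₂ • (single 1 1 + single 2 b) ≤ m) :
    ∃ i j, i + j = s ∧ i • (single 0 1 + single 1 a) + j • (single 1 1 + single 2 b) ≤ m := by
  have hx : i₁ ≤ m 0 := by simpa using hm₁ 0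
  have hy : i₂ * a + j₂ ≤ m 1 := by simpa using hm₂ 1
  have hz₁ : j₁ * b ≤ m 2 := by simpa using hm₁ 2
  have hz₂ : j₂ * b ≤ m 2 := by simpa using hm₂ 2
  rcases le_total j₁ j₂ with h | h
  · refine ⟨i₂, j₂, h₂, fun t => ?_⟩
    fin_cases t <;> simp <;> omega
  · have hy₁ : i₁ * a + j₁ ≤ m 1 := by nlinarith
    refine ⟨i₁, j₁, h₁, fun t => ?_⟩
    fin_cases t <;> simp <;> omega

theorem statement_6_general (k : Type*) [Field k] (a b : ℕ) (ha : 2 ≤ a) :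
    ∀ s : ℕ, 1 ≤ s →
      (Ideal.span {X 0, (X 2 : MvPolynomial (Fin 3) k) ^ b}) ^ s ⊓
          (Ideal.span {(X 1 : MvPolynomial (Fin 3) k) ^ a, X 1 * X 2 ^ b}) ^ s ≤
        (Ideal.span {(X 0 : MvPolynomial (Fin 3) k) * X 1 ^ a, X 1 * X 2 ^ b}) ^ s := by
  intro s _ p hp
  obtain ⟨hI, hJ⟩ := Ideal.mem_inf.1 hp
  have hx : (X 0 : MvPolynomial (Fin 3) k) = monomial (single 0 1) 1 := rfl
  have hxy : (X 0 : MvPolynomial (Fin 3) k) * X 1 ^ a = monomial (single 0 1 + single 1 a) 1 := by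
    rw [X_pow_eq_monomial, hx, monomial_mul, one_mul]
  have hyz : (X 1 : MvPolynomial (Fin 3) k) * X 2 ^ b = monomial (single 1 1 + single 2 b) 1 := by
    rw [X_pow_eq_monomial, X, monomial_mul, one_mul]
  rw [hx, X_pow_eq_monomial, mem_span_monomial_pair_pow_iff] at hI
  rw [X_pow_eq_monomial, hyz, mem_span_monomial_pair_pow_iff] at hJ
  rw [hxy, hyz, mem_span_monomial_pair_pow_iff]
  intro m hm
  obtain ⟨i₁, j₁, h₁, hm₁⟩ := hI m hm
  obtain ⟨i₂, j₂, h₂, hm₂⟩ := hJ m hm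
  exact exists_exponent_le_of_le_of_le (by omega) h₁ h₂ hm₁ hm₂

/-- In `R = k[x, y, z]` (here `x = X 0`, `y = X 1`, `z = X 2`), for integers
`a, b ≥ 2` and all `s ≥ 1`, `(x, z^b)^s ∩ (y^a, y z^b)^s ⊆ (x y^a, y z^b)^s`. -/
theorem statement_6 (k : Type*) [Field k] (a b : ℕ) (ha : 2 ≤ a) (hb : 2 ≤ b) :
    ∀ s : ℕ, 1 ≤ s →
      (Ideal.span {X 0, (X 2 : MvPolynomial (Fin 3) k) ^ b}) ^ s ⊓
          (Ideal.span {(X 1 : MvPolynomial (Fin 3) k) ^ a, X 1 * X 2 ^ b}) ^ s ≤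
        (Ideal.span {(X 0 : MvPolynomial (Fin 3) k) * X 1 ^ a, X 1 * X 2 ^ b}) ^ s :=
  statement_6_general k a b ha
end

section
/- Let D be a weighted oriented uni-directed line with vertices V(D) = {x₁, ..., xₙ} and directed edges E(D) = {(xᵢ, x_{i+1}) : 1 ≤ i ≤ n-1}, so that I(D) = (x₁x₂^{w₂}, x₂x₃^{w₃}, ..., x_{n-1}xₙ^{wₙ}). If for some i with 1 < i < n-1 one has wᵢ ≥ 2 and w_{i+1} = 1, then I(D)^(3) ≠ I(D)^3. -/
open MvPolynomial

/-!
The witness is `m = x_{i-1} x_i^{w_i} x_{i+1}^2 x_{i+2}^{w_{i+2}}`.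

`m ∉ I^3`: substituting `x_v ↦ t^{ω v}` for suitable weights `ω` sends every generator of `I`
into `(t^{w_i w_{i+2}})`, hence `I^3` into `(t^{3 w_i w_{i+2}})`, while `m` goes to a power of
`t` that is smaller by `w_{i+2}`.

`m ∈ I^{(3)}`: since `w_{i+1} = 1`, a monomial `μ ∉ I` cannot have all of `x_{i+1} μ`,
`x_{i+2} μ`, `x_{i+3} μ` in `I`, so no associated prime `(I : f)` contains all of `x_{i+1}`,
`x_{i+2}`, `x_{i+3}`. Multiplying `m` by `x_{i+1}`, `x_{i+2}^{w_{i+2}}` or `x_{i+3}^{w_{i+3}}` lands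
in `I^3`, and one of these becomes a unit after localizing at any associated prime.
-/

open MvPolynomial Finsupp

section SymbolicPower

variable {R : Type*} [CommRing R] {I : Ideal R}

theorem mem_symbolicPower_of_forall_exists_mul_mem {s : ℕ} {m : R}
    (h : ∀ p ∈ associatedPrimes R (R ⧸ I), ∃ u ∉ p, u * m ∈ I ^ s) :
    m ∈ symbolicPower I s := by
  refine (Submodule.mem_iInf _).mpr fun ⟨p, hp⟩ => ?_
  have := hp.isPrime
  obtain ⟨u, hu, hum⟩ := h p hp
  rw [Ideal.mem_comap, ← Ideal.unit_mul_mem_iff_mem _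
    (IsLocalization.map_units _ (⟨u, hu⟩ : p.primeCompl)), ← map_mul]
  exact Ideal.mem_map_of_mem _ hum

theorem exists_notMem_of_mem_associatedPrimes [IsNoetherianRing R] {p : Ideal R}
    (hp : p ∈ associatedPrimes R (R ⧸ I)) {T : Set R}
    (hT : ∀ f, (∀ t ∈ T, t * f ∈ I) → f ∈ I) : ∃ t ∈ T, t ∉ p := by
  obtain ⟨hprime, x, rfl⟩ := isAssociatedPrime_iff.mp hp
  obtain ⟨f, rfl⟩ := Ideal.Quotient.mk_surjective x
  by_contra! hTp
  have hf : f ∈ I := hT f fun t ht => by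
    have ht := hTp t ht
    rw [Submodule.mem_colon_singleton, Submodule.mem_bot] at ht
    exact Ideal.Quotient.eq_zero_iff_mem.mp (by rwa [map_mul])
  rw [Ideal.Quotient.eq_zero_iff_mem.mpr hf, Submodule.colon_singleton_zero] at hprime
  exact hprime.ne_top rfl

theorem mul_mem_pow_three (r : R) {g₁ g₂ g₃ : R} (h₁ : g₁ ∈ I) (h₂ : g₂ ∈ I) (h₃ : g₃ ∈ I) :
    r * (g₁ * g₂ * g₃) ∈ I ^ 3 :=
  Ideal.mul_mem_left _ r (pow_three' I ▸ Ideal.mul_mem_mul (Ideal.mul_mem_mul h₁ h₂) h₃)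

theorem notMem_pow_of_map_le_span_pow {S F : Type*} [CommRing S] [FunLike F R S]
    [RingHomClass F R S] (φ : F) {x : S} {N s : ℕ} (hI : I.map φ ≤ Ideal.span {x ^ N}) {m : R}
    (hm : ¬ x ^ (s * N) ∣ φ m) : m ∉ I ^ s := by
  intro h
  have h := Ideal.pow_right_mono hI s (Ideal.map_pow φ (I := I) s ▸ Ideal.mem_map_of_mem φ h)
  rw [Ideal.span_singleton_pow, Ideal.mem_span_singleton, ← pow_mul, mul_comm] at h
  exact hm h

end SymbolicPower

theorem Finsupp.single_add_single_le_iff {V : Type*} {a b : V} (hab : a ≠ b) {m n : ℕ}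
    {ν : V →₀ ℕ} : single a m + single b n ≤ ν ↔ m ≤ ν a ∧ n ≤ ν b := by
  refine ⟨fun h => ⟨?_, ?_⟩, fun ⟨ha, hb⟩ v => ?_⟩
  · simpa [hab.symm] using h a
  · simpa [hab] using h b
  · by_cases hva : v = a <;> by_cases hvb : v = b <;> simp_all [eq_comm]

namespace WOGraph

section Monomial

variable {V : Type*} (k : Type*) [Field k] (D : WOGraph V)

/-- `x^ν` is divisible by the generator `x y^{w(y)}` of some edge `(x, y)`. -/
def HasEdgeDivisor (ν : V →₀ ℕ) : Prop :=
  ∃ e ∈ D.E, 1 ≤ ν e.1 ∧ D.w e.2 ≤ ν e.2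

theorem X_mul_X_pow_mem_edgeIdeal {a b : V} (h : (a, b) ∈ D.E) :
    X a * X b ^ D.w b ∈ D.edgeIdeal k :=
  Ideal.subset_span ⟨(a, b), h, rfl⟩

theorem fst_ne_snd_of_mem_E {e : V × V} (he : e ∈ D.E) : e.1 ≠ e.2 := fun h => by
  have he : (e.1, e.2) ∈ D.E := he
  rw [h] at he
  exact D.loopless _ he

theorem mem_edgeIdeal_iff {f : MvPolynomial V k} :
    f ∈ D.edgeIdeal k ↔ ∀ ν ∈ f.support, D.HasEdgeDivisor ν := by
  have hspan : D.edgeIdeal k = Ideal.span ((fun s => monomial s (1 : k)) ''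
      ((fun e : V × V => single e.1 1 + single e.2 (D.w e.2)) '' D.E)) := by
    rw [Set.image_image, edgeIdeal]
    congr 1
    ext f
    simp only [X_pow_eq_monomial, Set.mem_ofPred_eq, Set.mem_image, eq_comm (a := f)]
    simp only [X, monomial_mul, one_mul]
  rw [hspan, mem_ideal_span_monomial_image]
  refine forall₂_congr fun ν _ => ?_
  simp only [Set.exists_mem_image, HasEdgeDivisor]
  exact exists_congr fun e =>
    and_congr_right fun he => single_add_single_le_iff (D.fst_ne_snd_of_mem_E he)

theorem mem_edgeIdeal_of_forall_X_mul_mem {T : Set V}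
    (hT : ∀ ν, (∀ v ∈ T, D.HasEdgeDivisor (single v 1 + ν)) → D.HasEdgeDivisor ν)
    {f : MvPolynomial V k} (hf : ∀ v ∈ T, X v * f ∈ D.edgeIdeal k) : f ∈ D.edgeIdeal k := by
  simp only [mem_edgeIdeal_iff, support_X_mul] at hf ⊢
  exact fun ν hν => hT ν fun v hv => hf v hv _ (Finset.mem_map_of_mem _ hν)

variable {D} in
theorem HasEdgeDivisor.of_single_add {v : V} {ν : V →₀ ℕ}
    (h : D.HasEdgeDivisor (single v 1 + ν)) (hν : ¬ D.HasEdgeDivisor ν) :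
    ∃ e ∈ D.E, (e.1 = v ∧ ν v = 0 ∧ D.w e.2 ≤ ν e.2) ∨
      (e.2 = v ∧ 1 ≤ ν e.1 ∧ ν v + 1 = D.w v) := by
  obtain ⟨e, he, h₁, h₂⟩ := h
  have hν' : 1 ≤ ν e.1 → ν e.2 < D.w e.2 := fun h => by
    by_contra! h'
    exact hν ⟨e, he, h, h'⟩
  have hne := D.fst_ne_snd_of_mem_E he
  refine ⟨e, he, ?_⟩
  simp only [Finsupp.add_apply] at h₁ h₂
  by_cases h1v : e.1 = v
  · subst h1v
    rw [single_eq_of_ne hne.symm, zero_add] at h₂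
    exact Or.inl ⟨rfl, by omega, h₂⟩
  · rw [single_eq_of_ne h1v, zero_add] at h₁
    by_cases h2v : e.2 = v
    · subst h2v
      rw [single_eq_same] at h₂
      exact Or.inr ⟨rfl, h₁, by omega⟩
    · rw [single_eq_of_ne h2v, zero_add] at h₂
      omega

end Monomial

section Witness

variable {V : Type*} (k : Type*) [Field k] (D : WOGraph V)

theorem map_edgeIdeal_le_span_X_pow (ω : V → ℕ) {N : ℕ}
    (h : ∀ e ∈ D.E, N ≤ ω e.1 + ω e.2 * D.w e.2) :
    (D.edgeIdeal k).map (aeval fun v => (Polynomial.X : Polynomial k) ^ ω v) ≤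
      Ideal.span {Polynomial.X ^ N} := by
  rw [edgeIdeal, Ideal.map_span, Ideal.span_le]
  rintro _ ⟨_, ⟨e, he, rfl⟩, rfl⟩
  simp only [map_mul, map_pow, aeval_X, ← pow_mul, ← pow_add, SetLike.mem_coe,
    Ideal.mem_span_singleton]
  exact pow_dvd_pow _ (h e he)

noncomputable def cubeWitness (a b c d : V) : MvPolynomial V k :=
  X a * X b ^ D.w b * X c ^ 2 * X d ^ D.w d

variable {D}

theorem X_mul_cubeWitness_mem {a b c d : V} (hbc : (b, c) ∈ D.E) (hcd : (c, d) ∈ D.E)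
    (hb : 2 ≤ D.w b) (hc : D.w c = 1) :
    X c * D.cubeWitness k a b c d ∈ D.edgeIdeal k ^ 3 := by
  obtain ⟨W, hW⟩ := Nat.exists_eq_add_of_le' hb
  have h : X c * D.cubeWitness k a b c d = X a * X b ^ W *
      ((X b * X c ^ D.w c) * (X b * X c ^ D.w c) * (X c * X d ^ D.w d)) := by
    rw [cubeWitness, hW, hc]
    ring
  rw [h]
  exact mul_mem_pow_three _ (D.X_mul_X_pow_mem_edgeIdeal k hbc)
    (D.X_mul_X_pow_mem_edgeIdeal k hbc) (D.X_mul_X_pow_mem_edgeIdeal k hcd)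

theorem X_pow_mul_cubeWitness_mem {a b c d : V} (hab : (a, b) ∈ D.E) (hcd : (c, d) ∈ D.E) :
    X d ^ D.w d * D.cubeWitness k a b c d ∈ D.edgeIdeal k ^ 3 := by
  have h : X d ^ D.w d * D.cubeWitness k a b c d =
      1 * ((X a * X b ^ D.w b) * (X c * X d ^ D.w d) * (X c * X d ^ D.w d)) := by
    rw [cubeWitness]
    ring
  rw [h]
  exact mul_mem_pow_three _ (D.X_mul_X_pow_mem_edgeIdeal k hab)
    (D.X_mul_X_pow_mem_edgeIdeal k hcd) (D.X_mul_X_pow_mem_edgeIdeal k hcd)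

theorem X_pow_mul_cubeWitness_mem_of_mem_E {a b c d e : V} (hbc : (b, c) ∈ D.E)
    (hde : (d, e) ∈ D.E) (hb : 2 ≤ D.w b) (hc : D.w c = 1) :
    X e ^ D.w e * D.cubeWitness k a b c d ∈ D.edgeIdeal k ^ 3 := by
  obtain ⟨W, hW⟩ := Nat.exists_eq_add_of_le' hb
  obtain ⟨W', hW'⟩ := Nat.exists_eq_add_of_le' (D.w_pos d)
  have h : X e ^ D.w e * D.cubeWitness k a b c d = X a * X b ^ W * X d ^ W' *
      ((X b * X c ^ D.w c) * (X b * X c ^ D.w c) * (X d * X e ^ D.w e)) := by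
    rw [cubeWitness, hW, hW', hc]
    ring
  rw [h]
  exact mul_mem_pow_three _ (D.X_mul_X_pow_mem_edgeIdeal k hbc)
    (D.X_mul_X_pow_mem_edgeIdeal k hbc) (D.X_mul_X_pow_mem_edgeIdeal k hde)

end Witness

section Line

variable {n : ℕ} (k : Type*) [Field k] {D : WOGraph (Fin n)}

theorem hasEdgeDivisor_of_forall_single_add_of_line
    (hE : D.E = {e : Fin n × Fin n | (e.2 : ℕ) = (e.1 : ℕ) + 1})
    {c : Fin n} (hc : D.w c = 1) (hcn : (c : ℕ) + 1 < n) (ν : Fin n →₀ ℕ)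
    (h : ∀ v : Fin n, c ≤ v → (v : ℕ) ≤ c + 2 → D.HasEdgeDivisor (single v 1 + ν)) :
    D.HasEdgeDivisor ν := by
  by_contra hν
  have hE' : ∀ e ∈ D.E, (e.2 : ℕ) = e.1 + 1 := fun e he => by rwa [hE] at he
  have hνc : ν c = 0 := by
    obtain ⟨e, -, ⟨h1, h0, -⟩ | ⟨h2, -, h1⟩⟩ := (h c le_rfl (by omega)).of_single_add hν
    · exact h0
    · omega
  set d : Fin n := ⟨c + 1, hcn⟩
  have hdc : (d : ℕ) = c + 1 := rfl
  obtain ⟨x, hx, hνd, hνx⟩ : ∃ x : Fin n, (x : ℕ) = c + 2 ∧ ν d = 0 ∧ D.w x ≤ ν x := by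
    obtain ⟨e, he, ⟨h1, h0, hw⟩ | ⟨h2, h1, -⟩⟩ :=
      (h d (Fin.le_def.2 (by omega)) (by omega)).of_single_add hν
    · exact ⟨e.2, by rw [hE' e he, h1], h0, hw⟩
    · have : e.1 = c := Fin.ext (by have := hE' e he; omega)
      rw [this] at h1
      omega
  obtain ⟨e, he, ⟨h1, h0, -⟩ | ⟨h2, h1, -⟩⟩ :=
    (h x (Fin.le_def.2 (by omega)) hx.le).of_single_add hν
  · have := D.w_pos x
    omega
  · have : e.1 = d := Fin.ext (by have := hE' e he; omega)
    rw [this] at h1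
    omega

theorem exists_X_notMem_of_mem_associatedPrimes_of_line
    (hE : D.E = {e : Fin n × Fin n | (e.2 : ℕ) = (e.1 : ℕ) + 1})
    {c : Fin n} (hc : D.w c = 1) (hcn : (c : ℕ) + 1 < n) {p : Ideal (MvPolynomial (Fin n) k)}
    (hp : p ∈ associatedPrimes _ (MvPolynomial (Fin n) k ⧸ D.edgeIdeal k)) :
    ∃ v : Fin n, c ≤ v ∧ (v : ℕ) ≤ c + 2 ∧ X v ∉ p := by
  obtain ⟨_, ⟨v, hv, rfl⟩, hvp⟩ := exists_notMem_of_mem_associatedPrimes hp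
    (T := X '' {v : Fin n | c ≤ v ∧ (v : ℕ) ≤ c + 2}) fun f hf =>
      D.mem_edgeIdeal_of_forall_X_mul_mem k (T := {v : Fin n | c ≤ v ∧ (v : ℕ) ≤ c + 2})
        (fun ν hν => hasEdgeDivisor_of_forall_single_add_of_line hE hc hcn ν
          fun v hcv hvc => hν v ⟨hcv, hvc⟩)
        fun v hv => hf _ ⟨v, hv, rfl⟩
  exact ⟨v, hv.1, hv.2, hvp⟩

/-- Weights making every generator of `I(D)` divisible by `t^{W W'}` while the cube witness
on `j, …, j + 3` has weight only `3 W W' - W'`. -/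
def cutWeight (j W W' t : ℕ) : ℕ :=
  if t = j then 0 else if t = j + 1 then W' else if t = j + 2 then (W - 1) * W'
  else if t = j + 3 then 1 else W * W'

theorem mul_le_cutWeight_add {j W W' t m : ℕ} (hW : 1 ≤ W) (hm : 1 ≤ m) (h₀ : t = j → m = W)
    (h₁ : t = j + 1 → m = 1) (h₂ : t = j + 2 → m = W') :
    W * W' ≤ cutWeight j W W' t + cutWeight j W W' (t + 1) * m := by
  have hsub : (W - 1) * W' + W' = W * W' := by
    rw [Nat.sub_mul, one_mul, Nat.sub_add_cancel (Nat.le_mul_of_pos_left _ hW)]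
  have hm' : W * W' ≤ W * W' * m := Nat.le_mul_of_pos_right _ hm
  have hcomm := Nat.mul_comm W' W
  unfold cutWeight
  by_cases h0 : t = j
  · rw [h₀ h0]; split_ifs <;> omega
  by_cases h1 : t = j + 1
  · rw [h₁ h1]; split_ifs <;> omega
  by_cases h2 : t = j + 2
  · rw [h₂ h2]; split_ifs <;> omega
  split_ifs <;> omega

theorem cubeWitness_notMem_edgeIdeal_pow_three_of_line
    (hE : D.E = {e : Fin n × Fin n | (e.2 : ℕ) = (e.1 : ℕ) + 1}) {a b c d : Fin n}
    (hab : (b : ℕ) = a + 1) (hac : (c : ℕ) = a + 2) (had : (d : ℕ) = a + 3)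
    (hb : 2 ≤ D.w b) (hc : D.w c = 1) :
    D.cubeWitness k a b c d ∉ D.edgeIdeal k ^ 3 := by
  refine notMem_pow_of_map_le_span_pow _ (D.map_edgeIdeal_le_span_X_pow k
    (fun v => cutWeight a (D.w b) (D.w d) v) (N := D.w b * D.w d) fun e he => ?_) ?_
  · have he' : (e.2 : ℕ) = e.1 + 1 := by rwa [hE] at he
    rw [he']
    exact mul_le_cutWeight_add (by omega) (D.w_pos e.2)
      (fun h => congrArg D.w (Fin.ext (by omega)))
      (fun h => hc ▸ congrArg D.w (Fin.ext (by omega)))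
      (fun h => congrArg D.w (Fin.ext (by omega)))
  · have hd := D.w_pos d
    have hsub : (D.w b - 1) * D.w d + D.w d = D.w b * D.w d := by
      rw [Nat.sub_mul, one_mul, Nat.sub_add_cancel (Nat.le_mul_of_pos_left _ (by omega))]
    simp only [cubeWitness, map_mul, map_pow, aeval_X, ← pow_mul, ← pow_add]
    rw [pow_dvd_pow_iff Polynomial.X_ne_zero Polynomial.not_isUnit_X]
    simp only [cutWeight, hab, hac, had, Nat.add_eq_left, Nat.add_left_cancel_iff,
      OfNat.ofNat_ne_zero, OfNat.ofNat_ne_one, Nat.succ_ne_self, ↓reduceIte, zero_add, one_mul,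
      not_le]
    nlinarith

end Line

end WOGraph

/-- Let `D` be a weighted oriented uni-directed line on vertices
`x₁, …, xₙ` (vertex `xₜ` is the index `t - 1 : Fin n`) with edges `(xᵢ, xᵢ₊₁)` for
`1 ≤ i ≤ n-1`.  If for some `1 < i < n-1` one has `wᵢ ≥ 2` and `wᵢ₊₁ = 1`, then
`I(D)^{(3)} ≠ I(D)^3`. -/
theorem statement_7 {n : ℕ} (k : Type*) [Field k] (D : WOGraph (Fin n))
    (hE : D.E = {e : Fin n × Fin n | (e.2 : ℕ) = (e.1 : ℕ) + 1})
    (i : ℕ) (hi1 : 1 < i) (hi2 : i < n - 1)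
    (hwi : 2 ≤ D.w ⟨i - 1, by omega⟩)
    (hwi1 : D.w ⟨i, by omega⟩ = 1) :
    symbolicPower (D.edgeIdeal k) 3 ≠ D.edgeIdeal k ^ 3 := by
  obtain ⟨j, rfl⟩ : ∃ j, i = j + 2 := ⟨i - 2, by omega⟩
  set a : Fin n := ⟨j, by omega⟩
  set b : Fin n := ⟨j + 1, by omega⟩
  set c : Fin n := ⟨j + 2, by omega⟩
  set d : Fin n := ⟨j + 3, by omega⟩
  have hmem : ∀ {u v : Fin n}, (v : ℕ) = u + 1 → (u, v) ∈ D.E := fun h => hE ▸ h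
  intro hsymb
  refine D.cubeWitness_notMem_edgeIdeal_pow_three_of_line k hE (a := a) (b := b) (c := c) (d := d)
    rfl rfl rfl hwi hwi1 ?_
  rw [← hsymb]
  refine mem_symbolicPower_of_forall_exists_mul_mem fun p hp => ?_
  have hcj : (c : ℕ) = j + 2 := rfl
  obtain ⟨v, hcv, hvc, hvp⟩ :=
    WOGraph.exists_X_notMem_of_mem_associatedPrimes_of_line k hE hwi1 (by omega) hp
  have hprime := hp.isPrime
  rw [Fin.le_def] at hcv
  rcases (by omega : (v : ℕ) = j + 2 ∨ (v : ℕ) = j + 3 ∨ (v : ℕ) = j + 4) with hv | hv | hv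
  · obtain rfl : v = c := Fin.ext hv
    exact ⟨X c, hvp, WOGraph.X_mul_cubeWitness_mem k (hmem rfl) (hmem rfl) hwi hwi1⟩
  · obtain rfl : v = d := Fin.ext hv
    exact ⟨X d ^ D.w d, fun h => hvp (hprime.mem_of_pow_mem _ h),
      WOGraph.X_pow_mul_cubeWitness_mem k (hmem rfl) (hmem rfl)⟩
  · exact ⟨X v ^ D.w v, fun h => hvp (hprime.mem_of_pow_mem _ h),
      WOGraph.X_pow_mul_cubeWitness_mem_of_mem_E k (hmem rfl) (hmem hv) hwi hwi1⟩
end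

section
/- Let R = k[u₁, u₂, u₃, u₄, u₅, u₆] be a polynomial ring over a field k, let a, b ≥ 2 and c ≥ 1 be integers, and let I = (u₁u₂, u₂u₃, u₃u₄^a, u₄u₅^b, u₅u₆^c). Then for all s ≥ 1, (u₃, u₅^b)^s ∩ (u₂, u₄^a)^s ∩ (u₁, u₃, u₄, u₆^c)^s ⊆ I^s. -/
/-!
If `f` lies in `(u₃, u₅ᵇ)ˢ`, every exponent vector `e` in its support satisfies
`e₃ + ⌊e₅ / b⌋ ≥ s`: the weight `e₃ + ⌊e₅ / b⌋` is superadditive and is at least `1` on both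
generators. Likewise `e₂ + ⌊e₄ / a⌋ ≥ s` and `e₁ + e₃ + e₄ + ⌊e₆ / c⌋ ≥ s`. As `Iˢ` is a
monomial ideal, it then suffices to choose multiplicities `n₁, …, n₅` summing to `s` of the five
generators of `I` whose product divides `uᵉ`, and the three inequalities allow an explicit greedy
choice.
-/

open MvPolynomial

namespace MvPolynomial

variable {σ R : Type*} [CommSemiring R]

theorem mem_of_forall_exists_le_monomial_mem {J : Ideal (MvPolynomial σ R)} {f : MvPolynomial σ R}
    (h : ∀ e ∈ f.support, ∃ d ≤ e, monomial d (1 : R) ∈ J) : f ∈ J := by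
  refine Ideal.span_le.2 ?_ ((mem_ideal_span_monomial_image (s := {d | monomial d 1 ∈ J})).2
    fun e he => (h e he).imp fun _ hd => hd.symm)
  rintro _ ⟨d, hd, rfl⟩
  exact hd

theorem le_weight_of_mem_span_pow {φ : (σ →₀ ℕ) → ℕ} (hφ : ∀ d e, φ d + φ e ≤ φ (d + e))
    {G : Set (MvPolynomial σ R)} (hG : ∀ g ∈ G, ∀ d ∈ g.support, 1 ≤ φ d) {s : ℕ}
    {f : MvPolynomial σ R} (hf : f ∈ Ideal.span G ^ s) {d : σ →₀ ℕ} (hd : d ∈ f.support) :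
    s ≤ φ d := by
  have mono {d e : σ →₀ ℕ} (h : d ≤ e) : φ d ≤ φ e := by
    obtain ⟨c, rfl⟩ := exists_add_of_le h
    exact (Nat.le_add_right _ _).trans (hφ d c)
  let J (n : ℕ) : Ideal (MvPolynomial σ R) :=
    Ideal.span ((fun d => monomial d 1) '' {d | n ≤ φ d})
  have mem_J {n : ℕ} {f : MvPolynomial σ R} : f ∈ J n ↔ ∀ d ∈ f.support, n ≤ φ d := by
    refine mem_ideal_span_monomial_image.trans
      ⟨fun h d hd => ?_, fun h d hd => ⟨d, h d hd, le_rfl⟩⟩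
    obtain ⟨d', hd', hle⟩ := h d hd
    exact hd'.trans (mono hle)
  have mul_J (m n : ℕ) : J m * J n ≤ J (m + n) := by
    rw [Ideal.span_mul_span']
    refine Ideal.span_mono ?_
    rintro _ ⟨_, ⟨d, hd, rfl⟩, _, ⟨e, he, rfl⟩, rfl⟩
    exact ⟨d + e, (add_le_add hd he).trans (hφ d e), by simp [monomial_mul]⟩
  have pow_le (n : ℕ) : Ideal.span G ^ n ≤ J n := by
    induction n with
    | zero => exact fun _ _ => mem_J.2 fun _ _ => Nat.zero_le _
    | succ n ih =>
      rw [pow_succ]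
      exact (Ideal.mul_mono ih (Ideal.span_le.2 fun g hg => mem_J.2 (hG g hg))).trans (mul_J n 1)
  exact mem_J.1 (pow_le s hf) d hd

theorem le_sum_div_of_mem_span_pow (S : Finset σ) (k : σ → ℕ) {G : Set (MvPolynomial σ R)}
    (hG : ∀ g ∈ G, ∃ i ∈ S, 0 < k i ∧ g = X i ^ k i) {s : ℕ} {f : MvPolynomial σ R}
    (hf : f ∈ Ideal.span G ^ s) {d : σ →₀ ℕ} (hd : d ∈ f.support) :
    s ≤ ∑ i ∈ S, d i / k i := by
  refine le_weight_of_mem_span_pow (φ := fun d => ∑ i ∈ S, d i / k i) (fun d e => ?_)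
    (fun g hg d hd => ?_) hf hd
  · simp only [Finsupp.add_apply, ← Finset.sum_add_distrib]
    exact Finset.sum_le_sum fun i _ => Nat.div_add_div_le_add_div
  · obtain ⟨i, hi, hki, rfl⟩ := hG g hg
    rw [X_pow_eq_monomial] at hd
    rw [Finset.mem_singleton.1 (support_monomial_subset hd)]
    calc 1 = Finsupp.single i (k i) i / k i := by simp [Nat.div_self hki]
      _ ≤ _ := Finset.single_le_sum (f := fun j => Finsupp.single i (k i) j / k j)
          (fun _ _ => Nat.zero_le _) hi

end MvPolynomial

theorem exists_edge_multiplicities (s e₀ e₁ e₂ e₃ B D H : ℕ) (h₁ : s ≤ e₂ + B)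
    (h₂ : s ≤ e₁ + D) (h₃ : s ≤ e₀ + e₂ + e₃ + H) :
    ∃ n₁ n₂ n₃ n₄ n₅ : ℕ, n₁ + n₂ + n₃ + n₄ + n₅ = s ∧ n₁ ≤ e₀ ∧ n₁ + n₂ ≤ e₁ ∧
      n₂ + n₃ ≤ e₂ ∧ (n₃ + n₄ ≤ D ∨ n₃ = 0 ∧ n₄ ≤ e₃) ∧ n₄ + n₅ ≤ B ∧ n₅ ≤ H := by
  -- Greedy: `n₄` takes as much of the budget `min B s` as it can, `n₃` tops `n₃ + n₄` up to
  -- `min D s`, the rest of the budget goes to `n₅` and then `n₁`, and `n₂` fills up to `s`.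
  -- If `e₀` cuts `n₁` short, then `n₅ = H` and `n₄ ≥ e₃`, so `h₃` bounds `n₂ + n₃` by `e₂`.
  obtain ⟨n₄, hn₄⟩ : ∃ n, n = min (max (min D s) e₃) (min B s) := ⟨_, rfl⟩
  obtain ⟨n₅, hn₅⟩ : ∃ n, n = min H (min B s - n₄) := ⟨_, rfl⟩
  obtain ⟨n₁, hn₁⟩ : ∃ n, n = min e₀ (min B s - n₄ - n₅) := ⟨_, rfl⟩
  exact ⟨n₁, s - n₁ - (min D s - n₄) - n₄ - n₅, min D s - n₄, n₄, n₅, by omega⟩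

theorem exists_edge_exponents {a b c s : ℕ} (ha : 1 ≤ a) (hb : 1 ≤ b) {e : Fin 6 →₀ ℕ}
    (h₁ : s ≤ e 2 + e 4 / b) (h₂ : s ≤ e 1 + e 3 / a) (h₃ : s ≤ e 0 + e 2 + e 3 + e 5 / c) :
    ∃ n₁ n₂ n₃ n₄ n₅ : ℕ, n₁ + n₂ + n₃ + n₄ + n₅ = s ∧ n₁ ≤ e 0 ∧ n₁ + n₂ ≤ e 1 ∧
      n₂ + n₃ ≤ e 2 ∧ a * n₃ + n₄ ≤ e 3 ∧ b * n₄ + n₅ ≤ e 4 ∧ c * n₅ ≤ e 5 := by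
  obtain ⟨n₁, n₂, n₃, n₄, n₅, hs, h₀, h₁, h₂, h₃, h₄, h₅⟩ :=
    exists_edge_multiplicities s (e 0) (e 1) (e 2) (e 3) (e 4 / b) (e 3 / a) (e 5 / c) h₁ h₂ h₃
  refine ⟨n₁, n₂, n₃, n₄, n₅, hs, h₀, h₁, h₂, ?_, ?_, ?_⟩
  · rcases h₃ with h₃ | ⟨rfl, h₃⟩
    · calc a * n₃ + n₄ ≤ a * (n₃ + n₄) := by nlinarith
        _ ≤ a * (e 3 / a) := Nat.mul_le_mul_left a h₃
        _ ≤ e 3 := Nat.mul_div_le _ _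
    · simpa using h₃
  · calc b * n₄ + n₅ ≤ b * (n₄ + n₅) := by nlinarith
      _ ≤ b * (e 4 / b) := Nat.mul_le_mul_left b h₄
      _ ≤ e 4 := Nat.mul_div_le _ _
  · exact (Nat.mul_le_mul_left c h₅).trans (Nat.mul_div_le _ _)

theorem exists_le_monomial_mem_pow {R : Type*} [CommSemiring R]
    {a b c s n₁ n₂ n₃ n₄ n₅ : ℕ} {e : Fin 6 →₀ ℕ} (hs : n₁ + n₂ + n₃ + n₄ + n₅ = s)
    (h₀ : n₁ ≤ e 0) (h₁ : n₁ + n₂ ≤ e 1) (h₂ : n₂ + n₃ ≤ e 2) (h₃ : a * n₃ + n₄ ≤ e 3)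
    (h₄ : b * n₄ + n₅ ≤ e 4) (h₅ : c * n₅ ≤ e 5) :
    ∃ d ≤ e, monomial d (1 : R) ∈ Ideal.span {X 0 * X 1, X 1 * X 2, X 2 * X 3 ^ a,
      X 3 * X 4 ^ b, (X 4 : MvPolynomial (Fin 6) R) * X 5 ^ c} ^ s := by
  open Finsupp in
  refine ⟨n₁ • (single 0 1 + single 1 1) + n₂ • (single 1 1 + single 2 1) +
    n₃ • (single 2 1 + single 3 a) + n₄ • (single 3 1 + single 4 b) +
    n₅ • (single 4 1 + single 5 c), fun i => ?_, ?_⟩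
  · fin_cases i <;> simp <;> linarith
  · have hprod : ((X 0 * X 1) ^ n₁ * (X 1 * X 2) ^ n₂ * (X 2 * X 3 ^ a) ^ n₃ *
        (X 3 * X 4 ^ b) ^ n₄ * (X 4 * X 5 ^ c) ^ n₅ : MvPolynomial (Fin 6) R) =
        monomial (n₁ • (single 0 1 + single 1 1) + n₂ • (single 1 1 + single 2 1) +
          n₃ • (single 2 1 + single 3 a) + n₄ • (single 3 1 + single 4 b) +
          n₅ • (single 4 1 + single 5 c)) 1 := by
      simp only [X, monomial_mul, monomial_pow, one_pow, mul_one, smul_single_one]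
    rw [← hprod, ← hs, pow_add, pow_add, pow_add, pow_add]
    refine Ideal.mul_mem_mul (Ideal.mul_mem_mul (Ideal.mul_mem_mul (Ideal.mul_mem_mul
      (Ideal.pow_mem_pow ?_ _) (Ideal.pow_mem_pow ?_ _)) (Ideal.pow_mem_pow ?_ _))
      (Ideal.pow_mem_pow ?_ _)) (Ideal.pow_mem_pow ?_ _) <;>
      exact Ideal.subset_span (by simp)

/-- In `R = k[u₁, …, u₆]` (here `uₜ = X (t-1) : MvPolynomial (Fin 6) k`),
for integers `a, b ≥ 2`, `c ≥ 1` and `I = (u₁u₂, u₂u₃, u₃u₄^a, u₄u₅^b, u₅u₆^c)`, one has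
`(u₃, u₅^b)^s ∩ (u₂, u₄^a)^s ∩ (u₁, u₃, u₄, u₆^c)^s ⊆ I^s` for all `s ≥ 1`. -/
theorem statement_11 (k : Type*) [Field k] (a b c : ℕ) (ha : 2 ≤ a) (hb : 2 ≤ b)
    (hc : 1 ≤ c) :
    ∀ s : ℕ, 1 ≤ s →
      (Ideal.span {X 2, (X 4 : MvPolynomial (Fin 6) k) ^ b}) ^ s ⊓
          (Ideal.span {X 1, (X 3 : MvPolynomial (Fin 6) k) ^ a}) ^ s ⊓
          (Ideal.span {X 0, X 2, X 3, (X 5 : MvPolynomial (Fin 6) k) ^ c}) ^ s ≤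
        (Ideal.span {X 0 * X 1, X 1 * X 2, X 2 * X 3 ^ a, X 3 * X 4 ^ b,
          (X 4 : MvPolynomial (Fin 6) k) * X 5 ^ c}) ^ s := by
  intro s _ f ⟨⟨hf₁, hf₂⟩, hf₃⟩
  refine mem_of_forall_exists_le_monomial_mem fun e he => ?_
  have hw₁ : s ≤ e 2 + e 4 / b := by
    simpa using le_sum_div_of_mem_span_pow {2, 4} (fun i => if i = 4 then b else 1)
      (by rintro g (rfl | rfl) <;> [exact ⟨2, by simp⟩; exact ⟨4, by simp; omega⟩]) hf₁ he
  have hw₂ : s ≤ e 1 + e 3 / a := by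
    simpa using le_sum_div_of_mem_span_pow {1, 3} (fun i => if i = 3 then a else 1)
      (by rintro g (rfl | rfl) <;> [exact ⟨1, by simp⟩; exact ⟨3, by simp; omega⟩]) hf₂ he
  have hw₃ : s ≤ e 0 + e 2 + e 3 + e 5 / c := by
    simpa [add_assoc] using le_sum_div_of_mem_span_pow {0, 2, 3, 5}
      (fun i => if i = 5 then c else 1)
      (by rintro g (rfl | rfl | rfl | rfl) <;>
        [exact ⟨0, by simp⟩; exact ⟨2, by simp⟩; exact ⟨3, by simp⟩; exact ⟨5, by simp; omega⟩])
      hf₃ he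
  obtain ⟨n₁, n₂, n₃, n₄, n₅, hs, h₀, h₁, h₂, h₃, h₄, h₅⟩ :=
    exists_edge_exponents (by omega) (by omega) hw₁ hw₂ hw₃
  exact exists_le_monomial_mem_pow hs h₀ h₁ h₂ h₃ h₄ h₅
end
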